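/- (Two-step lemma, with switch.) Consider the switched quantized control system with parameter α satisfying 1 < α < 3/2 and disturbance rounding error Δ_d with 0 < Δ_d ≤ 1/2. Suppose at time k condition (9) holds and additionally 1/2 ≤ e(k) + Δ_d < 1. Then: (i) e(k+1) = e(k) + Δ_d, ū(k+1) = ū(k) − α, and (ρ(e(k+1)), ρ(ū(k+1))) = (1, −1); (ii) e(k+2) = e(k) + 2Δ_d − 1 with −1/2 < e(k+2) < 1/2, ū(k+2) = 0, (ρ(e(k+2)), ρ(ū(k+2))) = (0, 0), and condition (9) holds at time k+2. -/

import Mathlib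

/-!
Under (9) both quantized signals vanish, so the error just drifts by `Δd` into the band where it
rounds to `1`. This triggers the switch: `ū` drops by `α` into `(-3/2, -1]` and is quantized to `-1`,
which pulls the error back by `1`, while the non-switched branch resets `ū` to `ρ(ū) + ρ(e) = -1 + 1 = 0`.
-/

/-- Sign function: 1 for positive, 0 for zero, -1 for negative. -/
noncomputable def rsign (z : ℝ) : ℤ :=
  if 0 < z then 1 else if z = 0 then 0 else -1

/-- Rounding operator: rounds to the nearest integer, ties away from zero. -/
noncomputable def rho (z : ℝ) : ℤ :=
  if Int.fract |z| < 1/2 then rsign z * ⌊|z|⌋ else rsign z * (⌊|z|⌋ + 1)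

/-- The switched quantized control system with parameter `α` and disturbance
rounding error `Δd`, with state trajectory `(e, u)`. -/
def Traj (α Δd : ℝ) (e u : ℕ → ℝ) : Prop :=
  ∀ k : ℕ,
    e (k+1) = e k + (rho (u k) : ℝ) + Δd ∧
    u (k+1) = if rho (e (k+1)) = 0
      then ((rho (u k) : ℝ) + (rho (e k) : ℝ))
      else (u k + (rho (e k) : ℝ) - α * (rho (e (k+1)) : ℝ))

/-- Condition (9) at time `k`. -/
def Cond9 (α Δd : ℝ) (e u : ℕ → ℝ) (k : ℕ) : Prop :=
  (-(1/2) < e k ∧ e k < 1/2) ∧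
  (1 ≤ α - u k * (rsign Δd : ℝ) ∧ α - u k * (rsign Δd : ℝ) < 3/2) ∧
  (-(1/2) < u k ∧ u k < 1/2)

lemma rsign_of_pos {z : ℝ} (hz : 0 < z) : rsign z = 1 := if_pos hz

lemma rsign_neg (z : ℝ) : rsign (-z) = -rsign z := by
  rcases lt_trichotomy z 0 with hz | rfl | hz
  · simp [rsign, hz, hz.ne, hz.not_gt]
  · simp [rsign]
  · simp [rsign, hz, hz.ne', hz.not_gt]

lemma rho_neg (z : ℝ) : rho (-z) = -rho z := by
  simp only [rho, abs_neg, rsign_neg]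
  split_ifs <;> ring

lemma rho_eq_zero_of_abs_lt {z : ℝ} (hz : |z| < 1/2) : rho z = 0 := by
  have hfloor : ⌊|z|⌋ = 0 := Int.floor_eq_zero_iff.2 ⟨abs_nonneg z, by linarith⟩
  have hfract : Int.fract |z| < 1/2 := by rwa [Int.fract, hfloor, Int.cast_zero, sub_zero]
  rw [rho, if_pos hfract, hfloor, mul_zero]

lemma rho_eq_of_pos {z : ℝ} (n : ℤ) (hz : 0 < z) (hlo : n - 1/2 ≤ z) (hhi : z < n + 1/2) :
    rho z = n := by
  simp only [rho, abs_of_pos hz, rsign_of_pos hz, one_mul]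
  rcases lt_or_ge z n with hlt | hge
  · have hfloor : ⌊z⌋ = n - 1 := Int.floor_eq_iff.2 ⟨by push_cast; linarith, by push_cast; linarith⟩
    rw [if_neg (by rw [Int.fract, hfloor]; push_cast; linarith), hfloor, sub_add_cancel]
  · have hfloor : ⌊z⌋ = n := Int.floor_eq_iff.2 ⟨hge, by linarith⟩
    rw [if_pos (by rw [Int.fract, hfloor]; linarith), hfloor]

namespace Traj

variable {α Δd : ℝ} {e u : ℕ → ℝ}

lemma e_succ (h : Traj α Δd e u) (k : ℕ) : e (k+1) = e k + rho (u k) + Δd := (h k).1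

lemma u_succ_of_rho_eq_zero (h : Traj α Δd e u) {k : ℕ} (hk : rho (e (k+1)) = 0) :
    u (k+1) = rho (u k) + rho (e k) := by
  rw [(h k).2, if_pos hk]

lemma u_succ_of_rho_ne_zero (h : Traj α Δd e u) {k : ℕ} (hk : rho (e (k+1)) ≠ 0) :
    u (k+1) = u k + rho (e k) - α * rho (e (k+1)) := by
  rw [(h k).2, if_neg hk]

end Traj

theorem stmt_12 (α Δd : ℝ) (hα : 1 < α ∧ α < 3/2) (hΔ : 0 < Δd ∧ Δd ≤ 1/2)
    (e u : ℕ → ℝ) (htraj : Traj α Δd e u) (k : ℕ) (h9 : Cond9 α Δd e u k)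
    (hstep : 1/2 ≤ e k + Δd ∧ e k + Δd < 1) :
    (e (k+1) = e k + Δd ∧ u (k+1) = u k - α ∧
      (rho (e (k+1)), rho (u (k+1))) = ((1 : ℤ), (-1 : ℤ))) ∧
    (e (k+2) = e k + 2*Δd - 1 ∧ (-(1/2) < e (k+2) ∧ e (k+2) < 1/2) ∧
      u (k+2) = 0 ∧
      (rho (e (k+2)), rho (u (k+2))) = ((0 : ℤ), (0 : ℤ)) ∧
      Cond9 α Δd e u (k+2)) := by
  obtain ⟨he, hαu, hu⟩ := h9
  rw [rsign_of_pos hΔ.1, Int.cast_one, mul_one] at hαu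
  have hρe : rho (e k) = 0 := rho_eq_zero_of_abs_lt (abs_lt.2 he)
  have hρu : rho (u k) = 0 := rho_eq_zero_of_abs_lt (abs_lt.2 hu)
  have he₁ : e (k+1) = e k + Δd := by rw [htraj.e_succ, hρu, Int.cast_zero, add_zero]
  have hρe₁ : rho (e (k+1)) = 1 := by
    rw [he₁]; exact rho_eq_of_pos 1 (by linarith) (by norm_num; linarith) (by norm_num; linarith)
  have hu₁ : u (k+1) = u k - α := by
    rw [htraj.u_succ_of_rho_ne_zero (by rw [hρe₁]; norm_num), hρe, hρe₁]; push_cast; ring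
  have hρu₁ : rho (u (k+1)) = -1 := by
    rw [← neg_neg (u (k+1)), rho_neg, hu₁,
      rho_eq_of_pos 1 (by linarith) (by norm_num; linarith) (by norm_num; linarith)]
  have he₂ : e (k+2) = e k + 2*Δd - 1 := by
    rw [htraj.e_succ (k+1), he₁, hρu₁]; push_cast; ring
  have he₂_mem : -(1/2) < e (k+2) ∧ e (k+2) < 1/2 := by
    rw [he₂]; constructor <;> linarith
  have hρe₂ : rho (e (k+2)) = 0 := rho_eq_zero_of_abs_lt (abs_lt.2 he₂_mem)
  have hu₂ : u (k+2) = 0 := by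
    rw [htraj.u_succ_of_rho_eq_zero hρe₂, hρu₁, hρe₁]; norm_num
  have hρu₂ : rho (u (k+2)) = 0 := by rw [hu₂]; exact rho_eq_zero_of_abs_lt (by norm_num)
  refine ⟨⟨he₁, hu₁, by rw [hρe₁, hρu₁]⟩, he₂, he₂_mem, hu₂, by rw [hρe₂, hρu₂], he₂_mem, ?_, ?_⟩
  · rw [hu₂, zero_mul, sub_zero]; exact ⟨hα.1.le, hα.2⟩
  · rw [hu₂]; norm_num
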